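/- Let p be a prime and F a field of characteristic p. Let G be a finite group, H a subgroup of G, and K a normal subgroup of G such that G = HK and p does not divide the index [K : H ∩ K]. Let E be a finite-dimensional F[H]-module on which H ∩ K acts trivially. Then the induced module Ind_H^G(E) decomposes as a direct sum Y ⊕ Y' of F[G]-modules, where K acts trivially on Y and the restriction of Y to H is isomorphic to E. Moreover, if E is indecomposable then Y is indecomposable. -/

import Mathlib

/-!
Since `G = HK` with `K` normal, `H / (H ∩ K) ≅ G / K`, so `E` extends to a representation `Ẽ`
of `G` on which `K` acts trivially. The evaluation map `Ind_H^G E → Ẽ`, `g ⊗ v ↦ g v`, is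
`G`-equivariant, and as `[G : H] = [K : H ∩ K]` is invertible in `F` it has the equivariant
section `v ↦ [G : H]⁻¹ ∑_{gH} g ⊗ g⁻¹ v`. So `Ind_H^G E ≅ Ẽ ⊕ ker`, and since `Ẽ` restricts to
`E`, restricting a decomposition of `Ẽ` to `H` decomposes `E`.
-/

open CategoryTheory Limits Pointwise

variable {F : Type} [Field F] {G : Type} [Group G]

/-- The relations defining `F[G] ⊗_{F[H]} E`: `(g h) ⊗ v = g ⊗ (h ⬝ v)`. -/
noncomputable def indRel (H : Subgroup G) (E : Rep F H) : Submodule F (G →₀ E) :=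
  Submodule.span F {x : G →₀ E | ∃ (g : G) (h : H) (v : E),
    x = Finsupp.single (g * (h : G)) v - Finsupp.single g (E.ρ h v)}

/-- Left translation by `g₀` on `F[G] ⊗_F E`. -/
noncomputable def indMap (H : Subgroup G) (E : Rep F H) (g₀ : G) :
    (G →₀ E) →ₗ[F] (G →₀ E) :=
  Finsupp.lmapDomain E F (fun g => g₀ * g)

lemma indRel_le (H : Subgroup G) (E : Rep F H) (g₀ : G) :
    indRel H E ≤ (indRel H E).comap (indMap H E g₀) := by
  rw [indRel, Submodule.span_le]
  rintro x ⟨g, h, v, rfl⟩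
  simp only [SetLike.mem_coe, Submodule.mem_comap, map_sub, indMap, Finsupp.lmapDomain_apply,
    Finsupp.mapDomain_single]
  exact Submodule.subset_span ⟨g₀ * g, h, v, by rw [mul_assoc]⟩

/-- The representation of `G` on `F[G] ⊗_{F[H]} E` by left translation. -/
noncomputable def indρ (H : Subgroup G) (E : Rep F H) :
    Representation F G ((G →₀ E) ⧸ indRel H E) where
  toFun g₀ := Submodule.mapQ _ _ (indMap H E g₀) (indRel_le H E g₀)
  map_one' := by
    apply Submodule.linearMap_qext
    ext g v
    simp [indMap, Submodule.mapQ_apply]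
  map_mul' g₁ g₂ := by
    apply Submodule.linearMap_qext
    ext g v
    simp [indMap, Submodule.mapQ_apply, mul_assoc]

/-- The induced module `Ind_H^G E = F[G] ⊗_{F[H]} E`. -/
noncomputable def ind (H : Subgroup G) (E : Rep F H) : Rep F G := Rep.of (indρ H E)

/-- A representation is indecomposable if it is nonzero and in any decomposition
as a direct sum of two representations, one factor is zero. -/
def RepIndecomposable {F : Type} [Field F] {G : Type} [Group G] (M : Rep F G) : Prop :=
  ¬ IsZero M ∧ ∀ X Y : Rep F G, Nonempty (M ≅ X ⊞ Y) → IsZero X ∨ IsZero Y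

namespace Subgroup

variable {G : Type*} [Group G] {H K : Subgroup G} [K.Normal]

lemma sup_eq_top_of_mul_eq_univ (hHK : (H : Set G) * (K : Set G) = Set.univ) : H ⊔ K = ⊤ :=
  SetLike.coe_injective (by rw [mul_normal, hHK, coe_top])

lemma relIndex_eq_index_of_mul_eq_univ [K.FiniteIndex]
    (hHK : (H : Set G) * (K : Set G) = Set.univ) : H.relIndex K = H.index := by
  have hK : K.relIndex H = K.index := by
    rw [← relIndex_sup_right, sup_eq_top_of_mul_eq_univ hHK, relIndex_top_right]
  have key : H.relIndex K * K.index = K.index * H.index := by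
    have := relIndex_inf_mul_relIndex H K ⊤
    rwa [inf_top_eq, relIndex_top_right, relIndex_top_right, ← relIndex_mul_index inf_le_left,
      inf_relIndex_left, hK] at this
  exact Nat.eq_of_mul_eq_mul_right (Nat.pos_of_ne_zero FiniteIndex.index_ne_zero)
    (key.trans (mul_comm _ _))

lemma mk'_comp_subtype_surjective_of_mul_eq_univ
    (hHK : (H : Set G) * (K : Set G) = Set.univ) :
    Function.Surjective ((QuotientGroup.mk' K).comp H.subtype) := by
  intro x
  induction x using QuotientGroup.induction_on with | H g => ?_
  obtain ⟨h, hh, k, hk, rfl⟩ : g ∈ (H : Set G) * (K : Set G) := hHK ▸ Set.mem_univ g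
  exact ⟨⟨h, hh⟩, QuotientGroup.eq.2 (by simpa using hk)⟩

noncomputable def quotientEquivOfMulEqUniv (hHK : (H : Set G) * (K : Set G) = Set.univ) :
    H ⧸ ((QuotientGroup.mk' K).comp H.subtype).ker ≃* G ⧸ K :=
  QuotientGroup.quotientKerEquivOfSurjective _ (mk'_comp_subtype_surjective_of_mul_eq_univ hHK)

end Subgroup

namespace MonoidHom

variable {G M : Type*} [Group G] [Monoid M] {H K : Subgroup G} [K.Normal]

noncomputable def extendOfMulEqUniv (hHK : (H : Set G) * (K : Set G) = Set.univ) (f : H →* M)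
    (hf : ∀ h : H, (h : G) ∈ K → f h = 1) : G →* M :=
  (QuotientGroup.lift _ f fun h hh => hf h (QuotientGroup.eq_one_iff _ |>.1 hh)).comp <|
    (Subgroup.quotientEquivOfMulEqUniv hHK).symm.toMonoidHom.comp (QuotientGroup.mk' K)

variable (hHK : (H : Set G) * (K : Set G) = Set.univ) (f : H →* M)
    (hf : ∀ h : H, (h : G) ∈ K → f h = 1)

lemma extendOfMulEqUniv_coe (h : H) : extendOfMulEqUniv hHK f hf h = f h := by
  have : (Subgroup.quotientEquivOfMulEqUniv hHK).symm (h : G ⧸ K) =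
      (h : H ⧸ ((QuotientGroup.mk' K).comp H.subtype).ker) :=
    (MulEquiv.symm_apply_eq _).2 rfl
  simp only [extendOfMulEqUniv, comp_apply, QuotientGroup.mk'_apply, MulEquiv.coe_toMonoidHom,
    this]
  rfl

lemma extendOfMulEqUniv_of_mem {k : G} (hk : k ∈ K) : extendOfMulEqUniv hHK f hf k = 1 := by
  simp [extendOfMulEqUniv, (QuotientGroup.eq_one_iff k).2 hk]

end MonoidHom

noncomputable def CategoryTheory.Abelian.isoBiprodKernelOfSection {C : Type*} [Category C]
    [Abelian C] {X Y : C} {π : X ⟶ Y} (σ : Y ⟶ X) (hσ : σ ≫ π = 𝟙 Y) : X ≅ Y ⊞ kernel π :=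
  (ShortComplex.Splitting.ofExactOfSection _ (ShortComplex.kernelSequence_exact π) σ hσ
    inferInstance).isoBinaryBiproduct ≪≫ biprod.braiding _ _

lemma RepIndecomposable.of_res_iso {H : Type} [Group H] (f : H →* G) {Y : Rep F G}
    {E : Rep F H} (e : (Rep.resFunctor f).obj Y ≅ E) (hE : RepIndecomposable E) :
    RepIndecomposable Y := by
  have isZero_res_iff (X : Rep F G) : IsZero ((Rep.resFunctor f).obj X) ↔ IsZero X :=
    (Rep.isZero_iff (M := _)).trans (Rep.isZero_iff (M := X)).symm
  refine ⟨fun hY => hE.1 (((isZero_res_iff Y).2 hY).of_iso e.symm), fun X Z ⟨i⟩ => ?_⟩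
  let R := Rep.resFunctor (k := F) f
  have : PreservesBinaryBiproducts R := preservesBinaryBiproducts_of_preservesBiproducts R
  exact (hE.2 _ _ ⟨e.symm ≪≫ R.mapIso i ≪≫ R.mapBiprod X Z⟩).imp (isZero_res_iff X).1
    (isZero_res_iff Z).1

section Induced

variable {H : Subgroup G} {E : Rep F H}

lemma indρ_mk_single (g₀ g : G) (v : E) :
    indρ H E g₀ (Submodule.Quotient.mk (Finsupp.single g v)) =
      Submodule.Quotient.mk (Finsupp.single (g₀ * g) v) := by
  simp [indρ, indMap, Submodule.mapQ_apply]

lemma ind_mk_single_mul (g : G) (h : H) (v : E) :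
    (Submodule.Quotient.mk (Finsupp.single (g * h) v) : (G →₀ E) ⧸ indRel H E) =
      Submodule.Quotient.mk (Finsupp.single g (E.ρ h v)) :=
  (Submodule.Quotient.eq _).2 (Submodule.subset_span ⟨g, h, v, rfl⟩)

variable (ρ : Representation F G E) (hρ : ∀ h : H, ρ h = E.ρ h)

noncomputable def indEvalₗ : ((G →₀ E) ⧸ indRel H E) →ₗ[F] E :=
  (indRel H E).liftQ (Finsupp.lsum F ρ) <| by
    rw [indRel, Submodule.span_le]
    rintro _ ⟨g, h, v, rfl⟩
    simp only [SetLike.mem_coe, LinearMap.mem_ker, map_sub, Finsupp.lsum_single, map_mul,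
      Module.End.mul_apply, hρ, sub_self]

lemma indEvalₗ_mk_single (g : G) (v : E) :
    indEvalₗ ρ hρ (Submodule.Quotient.mk (Finsupp.single g v)) = ρ g v := by
  simp [indEvalₗ]

noncomputable def indEval : ind H E ⟶ Rep.of ρ :=
  Rep.ofHom <| (indEvalₗ ρ hρ).intertwiningMap_of_isIntertwiningMap _ _ fun g₀ x => by
    induction x using Submodule.Quotient.induction_on with | _ y => ?_
    induction y using Finsupp.induction_linear with
    | zero => simp
    | add a b ha hb => simp only [Submodule.Quotient.mk_add, map_add, ha, hb]
    | single g v => simp [indρ_mk_single, indEvalₗ_mk_single, map_mul]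

noncomputable def indCosetTerm : G ⧸ H → E →ₗ[F] ((G →₀ E) ⧸ indRel H E) :=
  Quotient.lift (fun g => (indRel H E).mkQ ∘ₗ Finsupp.lsingle g ∘ₗ ρ g⁻¹) <| by
    intro a b hab
    obtain ⟨h, rfl⟩ : ∃ h : H, a * h = b :=
      ⟨⟨_, QuotientGroup.leftRel_apply.1 hab⟩, mul_inv_cancel_left a b⟩
    ext v
    simp [ind_mk_single_mul, ← Module.End.mul_apply, ← hρ, ← map_mul]

lemma indCosetTerm_mk (g : G) (v : E) :
    indCosetTerm ρ hρ g v = Submodule.Quotient.mk (Finsupp.single g (ρ g⁻¹ v)) :=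
  rfl

lemma indEvalₗ_indCosetTerm (x : G ⧸ H) (v : E) :
    indEvalₗ ρ hρ (indCosetTerm ρ hρ x v) = v := by
  induction x using QuotientGroup.induction_on with
  | H g => simp [indCosetTerm_mk, indEvalₗ_mk_single, ← Module.End.mul_apply, ← map_mul]

lemma indρ_indCosetTerm (g₀ : G) (x : G ⧸ H) (v : E) :
    indρ H E g₀ (indCosetTerm ρ hρ x v) = indCosetTerm ρ hρ (g₀ • x) (ρ g₀ v) := by
  induction x using QuotientGroup.induction_on with
  | H g => simp [indCosetTerm_mk, indρ_mk_single, ← Module.End.mul_apply, ← map_mul]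

variable [Fintype (G ⧸ H)]

noncomputable def indAverage : Rep.of ρ ⟶ ind H E :=
  Rep.ofHom <| LinearMap.intertwiningMap_of_isIntertwiningMap _ _
    ((H.index : F)⁻¹ • ∑ x : G ⧸ H, indCosetTerm ρ hρ x) fun g₀ v => by
      simp only [LinearMap.smul_apply, LinearMap.sum_apply, map_smul, map_sum, indρ_indCosetTerm]
      congr 1
      exact (Fintype.sum_bijective _ (MulAction.bijective g₀) _ _ fun _ => rfl).symm

lemma indAverage_indEval (hn : (H.index : F) ≠ 0) : indAverage ρ hρ ≫ indEval ρ hρ = 𝟙 _ := by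
  ext v
  change indEvalₗ ρ hρ (((H.index : F)⁻¹ • ∑ x : G ⧸ H, indCosetTerm ρ hρ x) v) = v
  rw [H.index_eq_card, Nat.card_eq_fintype_card] at hn ⊢
  simp [indEvalₗ_indCosetTerm, ← Nat.cast_smul_eq_nsmul F, smul_smul, inv_mul_cancel₀ hn]

end Induced

theorem stmt7_general (p : ℕ) (F : Type) [Field F] [CharP F p]
    (G : Type) [Group G] [Finite G] (H K : Subgroup G) [K.Normal]
    (hHK : (H : Set G) * (K : Set G) = Set.univ)
    (hindex : ¬ p ∣ (H ⊓ K).relIndex K)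
    (E : Rep F H)
    (htriv : ∀ h : H, (h : G) ∈ K → E.ρ h = 1) :
    ∃ Y Y' : Rep F G,
      Nonempty (ind H E ≅ Y ⊞ Y') ∧
      (∀ k ∈ K, Y.ρ k = 1) ∧
      Nonempty ((Rep.resFunctor H.subtype).obj Y ≅ E) ∧
      (RepIndecomposable E → RepIndecomposable Y) := by
  let ρ : Representation F G E := MonoidHom.extendOfMulEqUniv hHK E.ρ htriv
  have hρ : ∀ h : H, ρ h = E.ρ h := MonoidHom.extendOfMulEqUniv_coe hHK E.ρ htriv
  have hn : (H.index : F) ≠ 0 := by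
    rwa [Ne, CharP.cast_eq_zero_iff F p, ← Subgroup.relIndex_eq_index_of_mul_eq_univ hHK,
      ← Subgroup.inf_relIndex_right]
  have resIso : (Rep.resFunctor H.subtype).obj (Rep.of ρ) ≅ E :=
    eqToIso (congrArg Rep.of (MonoidHom.ext hρ))
  have := Fintype.ofFinite (G ⧸ H)
  exact ⟨Rep.of ρ, kernel (indEval ρ hρ),
    ⟨Abelian.isoBiprodKernelOfSection (indAverage ρ hρ) (indAverage_indEval ρ hρ hn)⟩,
    fun k hk => MonoidHom.extendOfMulEqUniv_of_mem hHK E.ρ htriv hk, ⟨resIso⟩,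
    RepIndecomposable.of_res_iso H.subtype resIso⟩

/-- let `charF = p`, `H ≤ G`, `K ⊴ G` with `G = HK` and `p ∤ [K : H ∩ K]`,
and let `E` be a finite-dimensional `F[H]`-module on which `H ∩ K` acts trivially.
Then `Ind_H^G E ≅ Y ⊞ Y'` where `K` acts trivially on `Y`, the restriction of `Y` to
`H` is isomorphic to `E`, and `Y` is indecomposable whenever `E` is. -/
theorem stmt7 (p : ℕ) (hp : p.Prime) (F : Type) [Field F] [CharP F p]
    (G : Type) [Group G] [Finite G] (H K : Subgroup G) [K.Normal]
    (hHK : (H : Set G) * (K : Set G) = Set.univ)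
    (hindex : ¬ p ∣ (H ⊓ K).relIndex K)
    (E : Rep F H) [FiniteDimensional F E]
    (htriv : ∀ h : H, (h : G) ∈ K → E.ρ h = 1) :
    ∃ Y Y' : Rep F G,
      Nonempty (ind H E ≅ Y ⊞ Y') ∧
      (∀ k ∈ K, Y.ρ k = 1) ∧
      Nonempty ((Rep.resFunctor H.subtype).obj Y ≅ E) ∧
      (RepIndecomposable E → RepIndecomposable Y) :=
  stmt7_general p F G H K hHK hindex E htriv
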